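/- arXiv:math/0203094 — 2 statements merged into one kernel-verified Lean document; each statement's English description precedes it below -/
import Mathlib

section
/- For every nonnegative integer L, ∑_{j=0}^{L} q^j (q;q)_L (q^{j-L};q)_j / ((q;q)_j^2 (q^{-L};q)_j) = ∑_{n=0}^{L} (-1)^n q^{T_n}, where T_n = n(n+1)/2, as an identity of rational functions (in fact polynomials) in q. -/
/-!
Reversing the order of the factors of `(q^{-M};q)_n` turns it, up to `(-1)^n` and a power
of `q`, into `(q;q)_M / (q;q)_{M-n}`. With `M = L` and `M = L - j` this cancels the
symbols with negative exponents, and the `j`-th summand becomes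
`q^{j(j+1)} (q;q)_{L-j}^2 / ((q;q)_j^2 (q;q)_{L-2j})` for `2j ≤ L`, while for `2j > L` it
vanishes because `(q^{j-L};q)_j` contains the factor `1 - q^{j-L} q^{L-j}`. These reduced
summands satisfy `s(L+2, j+1) = (1 - q^{L+2}) s(L+1, j+1) + q^{L+2} s(L, j)`, so both sides
of the identity obey `S_{L+2} = (1 - q^{L+2}) S_{L+1} + q^{L+2} S_L` and agree for `L = 0, 1`.
-/

/-- The q-Pochhammer symbol `(a;q)_n = ∏_{m=0}^{n-1} (1 - a q^m)`. -/
noncomputable def qPoch {K : Type*} [Field K] (a q : K) (n : ℕ) : K :=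
  ∏ m ∈ Finset.range n, (1 - a * q ^ m)

/-- The Gaussian binomial coefficient `[m choose n]_q`, interpreted as `0`
when `n < 0` or `m < n`. -/
noncomputable def qbinom {K : Type*} [Field K] (q : K) (m n : ℤ) : K :=
  if 0 ≤ n ∧ n ≤ m then
    qPoch q q m.toNat / (qPoch q q n.toNat * qPoch q q (m - n).toNat)
  else 0

/-- Triangular numbers `T n = n(n+1)/2`. -/
def T (n : ℕ) : ℕ := n * (n + 1) / 2

open Finset

section QPochhammer

variable {K : Type*} [Field K]

@[simp]
theorem qPoch_zero (a q : K) : qPoch a q 0 = 1 := prod_range_zero _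

theorem qPoch_succ (a q : K) (n : ℕ) : qPoch a q (n + 1) = qPoch a q n * (1 - a * q ^ n) :=
  prod_range_succ _ _

theorem qPoch_self_succ (q : K) (n : ℕ) :
    qPoch q q (n + 1) = qPoch q q n * (1 - q ^ (n + 1)) := by
  rw [qPoch_succ, pow_succ']

theorem qPoch_self_ne_zero {q : K} {n : ℕ} (hq : ∀ m, 1 ≤ m → m ≤ n → q ^ m ≠ 1) :
    qPoch q q n ≠ 0 := by
  refine prod_ne_zero_iff.mpr fun m hm => ?_
  rw [← pow_succ']
  exact sub_ne_zero.mpr fun h => hq (m + 1) le_add_self (mem_range.mp hm) h.symm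

theorem qPoch_zpow_neg_eq_zero {q : K} (hq : q ≠ 0) {M n : ℕ} (h : M < n) :
    qPoch (q ^ (-(M : ℤ))) q n = 0 := by
  refine prod_eq_zero (mem_range.mpr h) ?_
  rw [← zpow_natCast, ← zpow_add₀ hq, neg_add_cancel, zpow_zero, sub_self]

theorem pow_mul_qPoch_zpow_neg_mul_qPoch {q : K} (hq : q ≠ 0) {M n : ℕ} (h : n ≤ M) :
    q ^ (∑ m ∈ range n, (M - m)) * qPoch (q ^ (-(M : ℤ))) q n * qPoch q q (M - n)
      = (-1) ^ n * qPoch q q M := by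
  induction n with
  | zero => simp
  | succ n ih =>
    obtain ⟨k, rfl⟩ : ∃ k, M = n + 1 + k := ⟨M - (n + 1), by omega⟩
    have hcancel : q ^ (-((n + 1 + k : ℕ) : ℤ)) * q ^ n * q ^ (k + 1) = 1 := by
      rw [mul_assoc, ← pow_add, ← zpow_natCast, ← zpow_add₀ hq]
      push_cast
      rw [show -((n : ℤ) + 1 + k) + (n + (k + 1)) = 0 by ring, zpow_zero]
    rw [pow_succ, mul_right_comm ((-1 : K) ^ n), ← ih (by omega), sum_range_succ, qPoch_succ,
      show n + 1 + k - n = k + 1 by omega, show n + 1 + k - (n + 1) = k by omega,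
      qPoch_self_succ, pow_add]
    linear_combination -(q ^ (∑ m ∈ range n, (n + 1 + k - m)) *
      qPoch (q ^ (-((n + 1 + k : ℕ) : ℤ))) q n * qPoch q q k) * hcancel

noncomputable def reducedSummand (q : K) (L j : ℕ) : K :=
  if 2 * j ≤ L then
    q ^ (j * j + j) * qPoch q q (L - j) ^ 2 / (qPoch q q j ^ 2 * qPoch q q (L - 2 * j))
  else 0

theorem summand_eq_reducedSummand {q : K} (hq0 : q ≠ 0) {L j : ℕ}
    (hq : ∀ n, 1 ≤ n → n ≤ L → q ^ n ≠ 1) (hj : j ≤ L) :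
    q ^ j * qPoch q q L * qPoch (q ^ ((j : ℤ) - (L : ℤ))) q j /
        (qPoch q q j ^ 2 * qPoch (q ^ (-(L : ℤ))) q j)
      = reducedSummand q L j := by
  rw [show (j : ℤ) - L = -((L - j : ℕ) : ℤ) by omega, reducedSummand]
  split_ifs with h2
  · have hA := pow_mul_qPoch_zpow_neg_mul_qPoch hq0 (show j ≤ L - j by omega)
    have hB := pow_mul_qPoch_zpow_neg_mul_qPoch hq0 hj
    have hexp : ∑ m ∈ range j, (L - m) = ∑ m ∈ range j, (L - j - m) + j * j := by
      have hsplit : ∀ m ∈ range j, L - m = L - j - m + j := fun m hm => by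
        have := mem_range.mp hm; omega
      rw [sum_congr rfl hsplit, sum_add_distrib, sum_const, card_range, smul_eq_mul]
    rw [show L - j - j = L - 2 * j by omega] at hA
    rw [hexp, pow_add] at hB
    have hPL : qPoch q q L ≠ 0 := qPoch_self_ne_zero hq
    have hPj : qPoch q q j ≠ 0 := qPoch_self_ne_zero fun m h1 h2 => hq m h1 (by omega)
    have hP2j : qPoch q q (L - 2 * j) ≠ 0 :=
      qPoch_self_ne_zero fun m h1 h2 => hq m h1 (by omega)
    have hB0 : qPoch (q ^ (-(L : ℤ))) q j ≠ 0 :=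
      right_ne_zero_of_mul (left_ne_zero_of_mul (hB ▸ mul_ne_zero (by simp) hPL))
    rw [div_eq_div_iff (by positivity) (by positivity)]
    -- multiplying by the power of `q` in `hA` makes `hA` and `hB` enter linearly
    refine mul_left_cancel₀ (pow_ne_zero (∑ m ∈ range j, (L - j - m)) hq0) ?_
    linear_combination (q ^ j * qPoch q q L * qPoch q q j ^ 2) * hA
      - (q ^ j * qPoch q q (L - j) * qPoch q q j ^ 2) * hB
  · rw [qPoch_zpow_neg_eq_zero hq0 (by omega), mul_zero, zero_div]

theorem reducedSummand_zero {q : K} {L : ℕ} (hq : ∀ n, 1 ≤ n → n ≤ L → q ^ n ≠ 1) :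
    reducedSummand q L 0 = qPoch q q L := by
  rw [reducedSummand, if_pos (Nat.zero_le L)]
  simp [sq, qPoch_self_ne_zero hq]

theorem reducedSummand_of_lt (q : K) {L j : ℕ} (h : L < 2 * j) :
    reducedSummand q L j = 0 :=
  if_neg (by omega)

theorem reducedSummand_succ_succ {q : K} {L : ℕ} (j : ℕ)
    (hq : ∀ n, 1 ≤ n → n ≤ L + 2 → q ^ n ≠ 1) :
    reducedSummand q (L + 2) (j + 1)
      = (1 - q ^ (L + 2)) * reducedSummand q (L + 1) (j + 1)
        + q ^ (L + 2) * reducedSummand q L j := by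
  by_cases hgt : L < 2 * j
  · rw [reducedSummand_of_lt q (show L + 2 < 2 * (j + 1) by omega),
      reducedSummand_of_lt q (show L + 1 < 2 * (j + 1) by omega), reducedSummand_of_lt q hgt]
    ring
  have hPj : qPoch q q j ≠ 0 := qPoch_self_ne_zero fun m h1 h2 => hq m h1 (by omega)
  have hj1 : 1 - q ^ (j + 1) ≠ 0 :=
    sub_ne_zero.mpr fun h => hq (j + 1) le_add_self (by omega) h.symm
  rcases (not_lt.mp hgt).lt_or_eq with hlt | rfl
  · obtain ⟨d, rfl⟩ : ∃ d, L = 2 * j + 1 + d := ⟨L - (2 * j + 1), by omega⟩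
    have hPd : qPoch q q d ≠ 0 := qPoch_self_ne_zero fun m h1 h2 => hq m h1 (by omega)
    have hd1 : 1 - q ^ (d + 1) ≠ 0 :=
      sub_ne_zero.mpr fun h => hq (d + 1) le_add_self (by omega) h.symm
    simp only [reducedSummand]
    rw [if_pos (by omega), if_pos (by omega), if_pos (by omega),
      show 2 * j + 1 + d + 2 - (j + 1) = j + d + 1 + 1 by omega,
      show 2 * j + 1 + d + 2 - 2 * (j + 1) = d + 1 by omega,
      show 2 * j + 1 + d + 1 - (j + 1) = j + d + 1 by omega,
      show 2 * j + 1 + d + 1 - 2 * (j + 1) = d by omega,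
      show 2 * j + 1 + d - j = j + d + 1 by omega,
      show 2 * j + 1 + d - 2 * j = d + 1 by omega,
      qPoch_self_succ q (j + d + 1), qPoch_self_succ q d, qPoch_self_succ q j]
    field_simp
    ring
  · rw [reducedSummand_of_lt q (show 2 * j + 1 < 2 * (j + 1) by omega)]
    simp only [reducedSummand]
    rw [if_pos (by omega), if_pos le_rfl, show 2 * j + 2 - (j + 1) = j + 1 by omega,
      show 2 * j + 2 - 2 * (j + 1) = 0 by omega, show 2 * j - j = j by omega, Nat.sub_self,
      qPoch_zero, qPoch_self_succ q j]
    field_simp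
    ring

theorem sum_reducedSummand_succ_succ {q : K} {L : ℕ}
    (hq : ∀ n, 1 ≤ n → n ≤ L + 2 → q ^ n ≠ 1) :
    ∑ j ∈ range (L + 2 + 1), reducedSummand q (L + 2) j
      = (1 - q ^ (L + 2)) * ∑ j ∈ range (L + 1 + 1), reducedSummand q (L + 1) j
        + q ^ (L + 2) * ∑ j ∈ range (L + 1), reducedSummand q L j := by
  rw [sum_range_succ' (fun j => reducedSummand q (L + 2) j),
    sum_range_succ' (fun j => reducedSummand q (L + 1) j),
    sum_congr rfl fun j _ => reducedSummand_succ_succ j hq, sum_add_distrib, ← mul_sum,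
    ← mul_sum,
    sum_range_succ (fun j => reducedSummand q (L + 1) (j + 1)),
    sum_range_succ (fun j => reducedSummand q L j),
    reducedSummand_of_lt q (show L + 1 < 2 * (L + 1 + 1) by omega),
    reducedSummand_of_lt q (show L < 2 * (L + 1) by omega),
    reducedSummand_zero hq, reducedSummand_zero fun n h1 h2 => hq n h1 (by omega),
    qPoch_self_succ q (L + 1)]
  ring

theorem T_succ (n : ℕ) : T (n + 1) = T n + (n + 1) := by
  rw [T, T, show (n + 1) * (n + 1 + 1) = n * (n + 1) + 2 * (n + 1) by ring,
    Nat.add_mul_div_left _ _ two_pos]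

theorem sum_alternating_pow_T_succ_succ (q : K) (L : ℕ) :
    ∑ n ∈ range (L + 2 + 1), (-1 : K) ^ n * q ^ T n
      = (1 - q ^ (L + 2)) * ∑ n ∈ range (L + 1 + 1), (-1 : K) ^ n * q ^ T n
        + q ^ (L + 2) * ∑ n ∈ range (L + 1), (-1 : K) ^ n * q ^ T n := by
  rw [sum_range_succ _ (L + 2), sum_range_succ _ (L + 1), T_succ (L + 1), pow_add]
  ring

theorem sum_reducedSummand {q : K} {L : ℕ} (hq : ∀ n, 1 ≤ n → n ≤ L → q ^ n ≠ 1) :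
    ∑ j ∈ range (L + 1), reducedSummand q L j
      = ∑ n ∈ range (L + 1), (-1 : K) ^ n * q ^ T n := by
  induction L using Nat.twoStepInduction with
  | zero => simp [reducedSummand_zero hq, T]
  | one =>
    rw [sum_range_succ, sum_range_one, reducedSummand_of_lt q (show 1 < 2 * 1 by omega),
      reducedSummand_zero hq]
    simp [qPoch, T, sum_range_succ, sub_eq_add_neg]
  | more L ih₀ ih₁ =>
    rw [sum_reducedSummand_succ_succ hq, sum_alternating_pow_T_succ_succ,
      ih₀ fun n h1 h2 => hq n h1 (by omega), ih₁ fun n h1 h2 => hq n h1 (by omega)]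

end QPochhammer

theorem stmt4 {K : Type*} [Field K] (L : ℕ) (q : K) (hq0 : q ≠ 0)
    (hq : ∀ n : ℕ, 1 ≤ n → n ≤ L → q ^ n ≠ 1) :
    ∑ j ∈ Finset.range (L + 1),
        q ^ j * qPoch q q L * qPoch (q ^ ((j : ℤ) - (L : ℤ))) q j /
          (qPoch q q j ^ 2 * qPoch (q ^ (-(L : ℤ))) q j)
      = ∑ n ∈ Finset.range (L + 1), (-1 : K) ^ n * q ^ T n := by
  rw [sum_congr rfl fun j hj =>
    summand_eq_reducedSummand hq0 hq (Nat.lt_succ_iff.mp (mem_range.mp hj))]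
  exact sum_reducedSummand hq
end

section
/- (Shanks's identity, even case) For every positive integer L, ∑_{l=0}^{2L-1} q^{T_l} = ∑_{i=0}^{L-1} q^{i(2L+1)} (q^{2i+2};q^2)_{L-i} / (q^{2i+1};q^2)_{L-i}, where T_l = l(l+1)/2, as an identity of rational functions in q. -/
namespace Shanks6

variable {K : Type*} [Field K]

/-- `c q i = (q;q²)_i / (q²;q²)_i`. -/
noncomputable def c (q : K) (i : ℕ) : K :=
  qPoch q (q ^ 2) i / qPoch (q ^ 2) (q ^ 2) i

/-- `g q x n = ∑_{i<n} x^i c_i`. -/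
noncomputable def g (q x : K) (n : ℕ) : K :=
  ∑ i ∈ Finset.range n, x ^ i * c q i

lemma c_zero (q : K) : c q 0 = 1 := by
  unfold c qPoch; simp

lemma T_even (m : ℕ) : T (2 * m) = m * (2 * m + 1) := by
  unfold T
  rw [show 2 * m * (2 * m + 1) = 2 * (m * (2 * m + 1)) by ring,
    Nat.mul_div_cancel_left _ two_pos]

lemma T_odd (m : ℕ) : T (2 * m + 1) = (2 * m + 1) * (m + 1) := by
  unfold T
  rw [show (2 * m + 1) * (2 * m + 1 + 1) = 2 * ((2 * m + 1) * (m + 1)) by ring,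
    Nat.mul_div_cancel_left _ two_pos]

lemma poch_split (a Q : K) (m n : ℕ) :
    qPoch a Q (m + n) = qPoch a Q m * qPoch (a * Q ^ m) Q n := by
  unfold qPoch
  rw [Finset.prod_range_add]
  congr 1
  refine Finset.prod_congr rfl fun j _ => ?_
  rw [mul_assoc, ← pow_add]

section

variable {q : K} (hq : ∀ n : ℕ, 1 ≤ n → q ^ n ≠ 1)

include hq

lemma one_sub_ne {n : ℕ} (hn : 1 ≤ n) : (1 : K) - q ^ n ≠ 0 :=
  sub_ne_zero.mpr ((hq n hn).symm)

lemma poch_ne {k : ℕ} (hk : 1 ≤ k) (m : ℕ) : qPoch (q ^ k) (q ^ 2) m ≠ 0 := by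
  unfold qPoch
  rw [Finset.prod_ne_zero_iff]
  intro j _
  have h : q ^ k * (q ^ 2) ^ j = q ^ (k + 2 * j) := by
    rw [← pow_mul, ← pow_add]
  rw [h]
  exact one_sub_ne hq (le_add_right hk)

lemma poch_odd_ne (m : ℕ) : qPoch q (q ^ 2) m ≠ 0 := by
  have := poch_ne hq (k := 1) le_rfl m
  simpa using this

lemma c_ne (i : ℕ) : c q i ≠ 0 :=
  div_ne_zero (poch_odd_ne hq i) (poch_ne hq (by norm_num) i)

lemma crec (i : ℕ) :
    c q (i + 1) * (1 - q ^ (2 * i + 2)) = c q i * (1 - q ^ (2 * i + 1)) := by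
  have ho : q * (q ^ 2) ^ i = q ^ (2 * i + 1) := by
    rw [← pow_mul]; ring
  have he : q ^ 2 * (q ^ 2) ^ i = q ^ (2 * i + 2) := by
    rw [← pow_mul, ← pow_add]; ring_nf
  have hO : qPoch q (q ^ 2) (i + 1) = qPoch q (q ^ 2) i * (1 - q ^ (2 * i + 1)) := by
    unfold qPoch; rw [Finset.prod_range_succ, ho]
  have hE : qPoch (q ^ 2) (q ^ 2) (i + 1)
      = qPoch (q ^ 2) (q ^ 2) i * (1 - q ^ (2 * i + 2)) := by
    unfold qPoch; rw [Finset.prod_range_succ, he]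
  unfold c
  rw [hO, hE]
  have h1 : qPoch (q ^ 2) (q ^ 2) i ≠ 0 := poch_ne hq (by norm_num) i
  have h2 : (1 : K) - q ^ (2 * i + 2) ≠ 0 := one_sub_ne hq (by omega)
  field_simp

/-- Rogers–Fine type functional equation for the partial sum `g`. -/
lemma FE (n : ℕ) (x : K) :
    (1 - x) * g q x (n + 1)
      = (1 - x * q) * g q (x * q ^ 2) (n + 1)
        - x ^ (n + 1) * c q n * (1 - q ^ (2 * n + 1)) := by
  induction n with
  | zero =>
      unfold g
      rw [Finset.sum_range_one, Finset.sum_range_one, c_zero]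
      ring
  | succ n ih =>
      have hc := crec hq n
      have e1 : g q x (n + 2) = g q x (n + 1) + x ^ (n + 1) * c q (n + 1) := by
        unfold g; rw [Finset.sum_range_succ]
      have e2 : g q (x * q ^ 2) (n + 2)
          = g q (x * q ^ 2) (n + 1) + (x * q ^ 2) ^ (n + 1) * c q (n + 1) := by
        unfold g; rw [Finset.sum_range_succ]
      rw [e1, e2]
      linear_combination ih + x ^ (n + 1) * hc

lemma main (n : ℕ) :
    (∑ l ∈ Finset.range (2 * (n + 1)), q ^ T l) * c q (n + 1)
      = g q (q ^ (2 * (n + 1) + 1)) (n + 1) := by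
  induction n with
  | zero =>
      have hs : (∑ l ∈ Finset.range 2, q ^ T l) = 1 + q := by
        rw [Finset.sum_range_succ, Finset.sum_range_one]
        norm_num [T]
      have hc1 : c q 1 = (1 - q) / (1 - q ^ 2) := by
        unfold c qPoch; simp
      have h2 : (1 : K) - q ^ 2 ≠ 0 := one_sub_ne hq (by norm_num)
      show (∑ l ∈ Finset.range 2, q ^ T l) * c q 1 = g q (q ^ 3) 1
      rw [hs, hc1]
      unfold g
      rw [Finset.sum_range_one, c_zero]
      field_simp
      ring
  | succ n ih =>
      show (∑ l ∈ Finset.range (2 * (n + 1) + 1 + 1), q ^ T l) * c q (n + 2)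
          = g q (q ^ (2 * n + 5)) (n + 2)
      have hT1 : T (2 * (n + 1)) = (n + 1) * (2 * n + 3) := T_even (n + 1)
      have hT2 : T (2 * (n + 1) + 1) = (2 * n + 3) * (n + 2) := T_odd (n + 1)
      rw [Finset.sum_range_succ, Finset.sum_range_succ, hT1, hT2]
      have hg : g q (q ^ (2 * n + 5)) (n + 2)
          = g q (q ^ (2 * n + 3) * q ^ 2) (n + 1)
            + q ^ ((2 * n + 5) * (n + 1)) * c q (n + 1) := by
        have harg : q ^ (2 * n + 3) * q ^ 2 = q ^ (2 * n + 5) := by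
          rw [← pow_add]
        rw [harg]
        unfold g
        rw [Finset.sum_range_succ, ← pow_mul]
      rw [hg]
      have fe := FE hq n (q ^ (2 * n + 3))
      have hc1 := crec hq n
      have hc2 := crec hq (n + 1)
      have hD : (1 : K) - q ^ (2 * n + 4) ≠ 0 := one_sub_ne hq (by omega)
      have ih' : (∑ l ∈ Finset.range (2 * (n + 1)), q ^ T l) * c q (n + 1)
          = g q (q ^ (2 * n + 3)) (n + 1) := ih
      apply mul_right_cancel₀ hD
      linear_combination (1 - q ^ (2 * n + 3)) * ih' + fe
        + q ^ ((n + 1) * (2 * n + 3)) * hc1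
        + ((∑ l ∈ Finset.range (2 * (n + 1)), q ^ T l)
            + q ^ ((n + 1) * (2 * n + 3)) + q ^ ((2 * n + 3) * (n + 2))) * hc2

lemma ratio_eq {L i : ℕ} (hi : i < L) :
    qPoch (q ^ (2 * i + 2)) (q ^ 2) (L - i) / qPoch (q ^ (2 * i + 1)) (q ^ 2) (L - i)
      = c q i / c q L := by
  have hsplit : i + (L - i) = L := by omega
  have ho : q * (q ^ 2) ^ i = q ^ (2 * i + 1) := by rw [← pow_mul]; ring
  have he : q ^ 2 * (q ^ 2) ^ i = q ^ (2 * i + 2) := by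
    rw [← pow_mul, ← pow_add]; ring_nf
  have hO : qPoch q (q ^ 2) L
      = qPoch q (q ^ 2) i * qPoch (q ^ (2 * i + 1)) (q ^ 2) (L - i) := by
    have h := poch_split q (q ^ 2) i (L - i)
    rw [hsplit, ho] at h
    exact h
  have hE : qPoch (q ^ 2) (q ^ 2) L
      = qPoch (q ^ 2) (q ^ 2) i * qPoch (q ^ (2 * i + 2)) (q ^ 2) (L - i) := by
    have h := poch_split (q ^ 2) (q ^ 2) i (L - i)
    rw [hsplit, he] at h
    exact h
  unfold c
  rw [hO, hE]
  have n1 : qPoch q (q ^ 2) i ≠ 0 := poch_odd_ne hq i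
  have n2 : qPoch (q ^ 2) (q ^ 2) i ≠ 0 := poch_ne hq (by norm_num) i
  have n3 : qPoch (q ^ (2 * i + 1)) (q ^ 2) (L - i) ≠ 0 := poch_ne hq (by omega) (L - i)
  have n4 : qPoch (q ^ (2 * i + 2)) (q ^ 2) (L - i) ≠ 0 := poch_ne hq (by omega) (L - i)
  field_simp

end

end Shanks6

/-- Shanks's identity, even case. -/
theorem stmt6 {K : Type*} [Field K] (L : ℕ) (hL : 1 ≤ L) (q : K)
    (hq : ∀ n : ℕ, 1 ≤ n → q ^ n ≠ 1) :
    ∑ l ∈ Finset.range (2 * L), q ^ T l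
      = ∑ i ∈ Finset.range L,
          q ^ (i * (2 * L + 1)) *
            qPoch (q ^ (2 * i + 2)) (q ^ 2) (L - i) /
            qPoch (q ^ (2 * i + 1)) (q ^ 2) (L - i) := by
  obtain ⟨n, rfl⟩ : ∃ n, L = n + 1 := ⟨L - 1, by omega⟩
  have hmain := Shanks6.main hq n
  have hcne := Shanks6.c_ne hq (n + 1)
  have hR : ∑ i ∈ Finset.range (n + 1),
        q ^ (i * (2 * (n + 1) + 1)) *
          qPoch (q ^ (2 * i + 2)) (q ^ 2) (n + 1 - i) /
          qPoch (q ^ (2 * i + 1)) (q ^ 2) (n + 1 - i)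
      = Shanks6.g q (q ^ (2 * (n + 1) + 1)) (n + 1) / Shanks6.c q (n + 1) := by
    unfold Shanks6.g
    rw [Finset.sum_div]
    refine Finset.sum_congr rfl fun i hi => ?_
    have hi' : i < n + 1 := Finset.mem_range.mp hi
    have hp : (q ^ (2 * (n + 1) + 1)) ^ i = q ^ (i * (2 * (n + 1) + 1)) := by
      rw [← pow_mul, Nat.mul_comm]
    rw [mul_div_assoc, Shanks6.ratio_eq hq hi', hp]
    ring
  rw [hR, eq_div_iff hcne]
  exact hmain
end
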